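/- The graphical Sierpinski carpet G = (V, E), with V = (z_0 + ℤ^d) ∩ F̂ and E the set of pairs of vertices at Euclidean distance 1, is a connected graph. -/

import Mathlib

open Set

/-- The open central block removed, at stage `n`, from the subcube of side `k^(-n)`
indexed by `m ∈ {0,…,k^n-1}^d`. -/
def centralBlock (d k a n : ℕ) (m : Fin d → ℕ) : Set (Fin d → ℝ) :=
  {x | ∀ i, (m i : ℝ) / (k : ℝ) ^ n + ((k : ℝ) - a) / (2 * (k : ℝ) ^ (n + 1)) < x i ∧
        x i < (m i : ℝ) / (k : ℝ) ^ n + ((k : ℝ) + a) / (2 * (k : ℝ) ^ (n + 1))}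

/-- The `n`-th stage `F_n` of the Sierpinski carpet construction in `[0,1]^d`. -/
def carpetF (d k a : ℕ) : ℕ → Set (Fin d → ℝ)
  | 0 => Set.Icc 0 1
  | n + 1 => carpetF d k a n \
      ⋃ m ∈ {m : Fin d → ℕ | ∀ i, m i < k ^ n}, centralBlock d k a n m

/-- The pre-Sierpinski carpet `F̂ = ⋃_{n ≥ 1} kⁿ F_n ⊆ [0,∞)^d`. -/
def preCarpet (d k a : ℕ) : Set (Fin d → ℝ) :=
  ⋃ n ∈ {n : ℕ | 1 ≤ n}, (fun x => ((k : ℝ) ^ n) • x) '' carpetF d k a n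

/-- The vertex set `V = (z₀ + ℤ^d) ∩ F̂` of the graphical Sierpinski carpet,
where `z₀ = (1/2, …, 1/2)`. -/
def carpetVertexSet (d k a : ℕ) : Set (Fin d → ℝ) :=
  {x | (∀ i, ∃ z : ℤ, x i = (z : ℝ) + 1 / 2) ∧ x ∈ preCarpet d k a}

/-- The graphical Sierpinski carpet: vertices `V`, edges the pairs of vertices at
Euclidean distance `1`. -/
def carpetGraph (d k a : ℕ) : SimpleGraph (carpetVertexSet d k a) where
  Adj u v := Real.sqrt (∑ i, (u.1 i - v.1 i) ^ 2) = 1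
  symm := by
    constructor
    intro u v h
    rw [← h]
    congr 1
    exact Finset.sum_congr rfl fun i _ => by ring
  loopless := by
    constructor
    intro u h
    simp [sub_self] at h


/-!
Write `k = a + 2b`. The centre `z + z₀` of a lattice cube (`z ∈ ℕᵈ`) lies in `F̂` exactly when
there is no base-`k` digit position `s` at which every coordinate `zᵢ` has its digit in the
middle range `[b, b + a)`; the holes of level `s` are the cubes where this happens. From such
a `z ≠ 0` one can always step to a neighbour with smaller coordinate sum: if `z - eᵢ` falls into
a hole of level `s`, then `k ^ s ∣ zᵢ`, and for any `j ≠ i` the point `z - eⱼ` still avoids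
every hole. So every vertex is joined to `z₀`.
-/

def digit (k s n : ℕ) : ℕ := n / k ^ s % k

lemma digit_eq_zero_of_lt_pow {k s n : ℕ} (h : n < k ^ s) : digit k s n = 0 := by
  simp [digit, Nat.div_eq_of_lt h]

lemma digit_eq_zero_of_pow_dvd {k s t n : ℕ} (hts : t < s) (h : k ^ s ∣ n) : digit k t n = 0 := by
  have : k ^ t * k ∣ n := (pow_succ k t ▸ pow_dvd_pow k hts).trans h
  exact Nat.mod_eq_zero_of_dvd (Nat.dvd_div_of_mul_dvd this)

lemma pow_dvd_of_digit_pred_ne {k s n : ℕ} (h : digit k s (n - 1) ≠ digit k s n) :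
    k ^ s ∣ n := by
  obtain _ | m := n
  · exact dvd_zero _
  · by_contra hdvd
    simp [digit, Nat.succ_div, hdvd] at h

lemma digit_pred_eq {k s t n : ℕ} (hst : s < t) (h : digit k s n ≠ 0) :
    digit k t (n - 1) = digit k t n := by
  by_contra hne
  exact h (digit_eq_zero_of_pow_dvd hst (pow_dvd_of_digit_pred_ne hne))

def CarpetDigits {ι : Type*} (k : ℕ) (D : Set ℕ) (z : ι → ℕ) : Prop :=
  ∀ s, ∃ i, digit k s (z i) ∉ D

lemma carpetDigits_zero {ι : Type*} [Nonempty ι] {k : ℕ} {D : Set ℕ} (hD : 0 ∉ D) :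
    CarpetDigits k D (0 : ι → ℕ) :=
  fun s => ⟨Classical.arbitrary ι, by simpa [digit] using hD⟩

/- `z - eᵢ` in a hole of level `s` forces `k ^ s ∣ z i`, so the digits of `z i` avoid `D` at
all levels `≤ s`; the level-`s` digit of `z j` lies in `D`, hence is nonzero, so decrementing
`z j` leaves its digits above level `s` unchanged. -/
lemma CarpetDigits.exists_update_pred {ι : Type*} [DecidableEq ι] [Nontrivial ι] {k : ℕ}
    {D : Set ℕ} (hD : 0 ∉ D) {z : ι → ℕ} (hz : CarpetDigits k D z) {i : ι} (hi : z i ≠ 0) :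
    ∃ j, z j ≠ 0 ∧ CarpetDigits k D (Function.update z j (z j - 1)) := by
  by_cases hzi : CarpetDigits k D (Function.update z i (z i - 1))
  · exact ⟨i, hi, hzi⟩
  simp only [CarpetDigits, not_forall, not_exists, not_not] at hzi
  obtain ⟨s, hs⟩ := hzi
  have hin : ∀ l, l ≠ i → digit k s (z l) ∈ D := fun l hl => by
    simpa [Function.update_of_ne hl] using hs l
  have hzs : digit k s (z i) ∉ D := by
    obtain ⟨l, hl⟩ := hz s
    obtain rfl : l = i := by_contra fun h => hl (hin l h)
    exact hl
  have hdvd : k ^ s ∣ z i :=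
    pow_dvd_of_digit_pred_ne fun h => hzs (by simpa [← h] using hs i)
  have hzi_out : ∀ t ≤ s, digit k t (z i) ∉ D := fun t ht => by
    obtain rfl | ht := ht.eq_or_lt
    · exact hzs
    · rwa [digit_eq_zero_of_pow_dvd ht hdvd]
  obtain ⟨j, hji⟩ := exists_ne i
  have hzj : digit k s (z j) ≠ 0 := fun h => hD (h ▸ hin j hji)
  refine ⟨j, fun h => by simp [h, digit] at hzj, fun t => ?_⟩
  rcases le_or_gt t s with hts | hst
  · exact ⟨i, by rw [Function.update_of_ne hji.symm]; exact hzi_out t hts⟩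
  · obtain ⟨l, hl⟩ := hz t
    refine ⟨l, ?_⟩
    rcases eq_or_ne l j with rfl | hlj
    · rwa [Function.update_self, digit_pred_eq hst hzj]
    · rwa [Function.update_of_ne hlj]

lemma natCast_lt_add_half_iff {m n : ℕ} : (m : ℝ) < n + 1 / 2 ↔ m ≤ n := by
  constructor
  · intro h
    have : (m : ℝ) < n + 1 := by linarith
    exact_mod_cast Nat.lt_succ_iff.mp (by exact_mod_cast this)
  · intro h
    have : (m : ℝ) ≤ n := by exact_mod_cast h
    linarith

lemma add_half_le_natCast_iff {m n : ℕ} : (n : ℝ) + 1 / 2 ≤ m ↔ n < m := by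
  rw [← not_lt, natCast_lt_add_half_iff, not_le]

lemma add_half_lt_natCast_iff {m n : ℕ} : (n : ℝ) + 1 / 2 < m ↔ n < m := by
  constructor
  · intro h
    exact_mod_cast (by linarith : (n : ℝ) < m)
  · intro h
    have : (n : ℝ) + 1 ≤ m := by exact_mod_cast h
    linarith

lemma div_eq_and_mod_mem_Ico_iff {a b k m q : ℕ} (hba : b + a ≤ k) :
    (m * k + b ≤ q ∧ q < m * k + b + a) ↔ q / k = m ∧ q % k ∈ Ico b (b + a) := by
  have hdm := Nat.div_add_mod q k
  constructor
  · rintro ⟨hlo, hhi⟩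
    have hq : q / k = m := Nat.div_eq_of_lt_le (by omega) (by rw [add_one_mul]; omega)
    rw [hq, mul_comm] at hdm
    exact ⟨hq, by omega, by omega⟩
  · rintro ⟨hq, hlo, hhi⟩
    rw [hq, mul_comm] at hdm
    omega

lemma centralBlock_coord_iff {a b k : ℕ} (hk : k = a + 2 * b) (hk0 : 0 < k) (z m j s : ℕ) :
    ((m : ℝ) / (k : ℝ) ^ j + ((k : ℝ) - a) / (2 * (k : ℝ) ^ (j + 1)) <
        ((z : ℝ) + 1 / 2) / (k : ℝ) ^ (j + 1 + s) ∧
      ((z : ℝ) + 1 / 2) / (k : ℝ) ^ (j + 1 + s) <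
        (m : ℝ) / (k : ℝ) ^ j + ((k : ℝ) + a) / (2 * (k : ℝ) ^ (j + 1))) ↔
    z / k ^ (s + 1) = m ∧ digit k s z ∈ Ico b (b + a) := by
  have hK : (0 : ℝ) < (k : ℝ) ^ (j + 1 + s) := by positivity
  have hkR : (k : ℝ) = a + 2 * b := by exact_mod_cast hk
  have lower : ((m : ℝ) / (k : ℝ) ^ j + ((k : ℝ) - a) / (2 * (k : ℝ) ^ (j + 1))) *
      (k : ℝ) ^ (j + 1 + s) = (((m * k + b) * k ^ s : ℕ) : ℝ) := by
    rw [show (k : ℝ) - a = 2 * b by linarith]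
    push_cast
    field_simp
    ring
  have upper : ((m : ℝ) / (k : ℝ) ^ j + ((k : ℝ) + a) / (2 * (k : ℝ) ^ (j + 1))) *
      (k : ℝ) ^ (j + 1 + s) = (((m * k + b + a) * k ^ s : ℕ) : ℝ) := by
    rw [show (k : ℝ) + a = 2 * (b + a) by linarith]
    push_cast
    field_simp
    ring
  rw [lt_div_iff₀ hK, div_lt_iff₀ hK, lower, upper, natCast_lt_add_half_iff,
    add_half_lt_natCast_iff, ← Nat.le_div_iff_mul_le (by positivity),
    ← Nat.div_lt_iff_lt_mul (by positivity), div_eq_and_mod_mem_Ico_iff (by omega),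
    Nat.div_div_eq_div_mul, ← pow_succ, digit]

lemma mem_carpetF_iff {d k a n : ℕ} {x : Fin d → ℝ} :
    x ∈ carpetF d k a n ↔ x ∈ Icc 0 1 ∧
      ∀ j < n, ∀ m : Fin d → ℕ, (∀ i, m i < k ^ j) → x ∉ centralBlock d k a j m := by
  induction n with
  | zero => simp [carpetF]
  | succ n ih =>
    simp only [carpetF, mem_sdiff, ih, mem_iUnion, mem_ofPred_eq, not_exists,
      Nat.lt_succ_iff_lt_or_eq, or_imp, forall_and, forall_eq, and_assoc]

lemma nonneg_of_mem_preCarpet {d k a : ℕ} {x : Fin d → ℝ} (hx : x ∈ preCarpet d k a) (i : Fin d) :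
    0 ≤ x i := by
  simp only [preCarpet, mem_iUnion, mem_image] at hx
  obtain ⟨n, -, y, hy, rfl⟩ := hx
  exact mul_nonneg (by positivity) ((mem_carpetF_iff.mp hy).1.1 i)

lemma mem_preCarpet_iff {d k a : ℕ} (hk : 0 < k) {x : Fin d → ℝ} :
    x ∈ preCarpet d k a ↔ ∃ n, 1 ≤ n ∧ (fun i => x i / (k : ℝ) ^ n) ∈ carpetF d k a n := by
  have hK (n : ℕ) : (k : ℝ) ^ n ≠ 0 := by positivity
  simp only [preCarpet, mem_iUnion, mem_image, mem_ofPred_eq, exists_prop]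
  constructor
  · rintro ⟨n, hn, y, hy, rfl⟩
    refine ⟨n, hn, ?_⟩
    convert hy using 1
    ext i
    simp [hK n]
  · rintro ⟨n, hn, hx⟩
    refine ⟨n, hn, _, hx, ?_⟩
    ext i
    simp [mul_div_cancel₀ _ (hK n)]

noncomputable def cellCenter {d : ℕ} (z : Fin d → ℕ) : Fin d → ℝ := fun i => (z i : ℝ) + 1 / 2

lemma scaledCellCenter_mem_Icc_iff {d k : ℕ} (hk : 0 < k) (z : Fin d → ℕ) (n : ℕ) :
    (fun i => cellCenter z i / (k : ℝ) ^ n) ∈ Icc 0 1 ↔ ∀ i, z i < k ^ n := by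
  have hK : (0 : ℝ) < (k : ℝ) ^ n := by positivity
  simp only [mem_Icc, Pi.le_def, Pi.zero_apply, Pi.one_apply, cellCenter, div_le_one hK]
  refine ⟨fun h i => ?_, fun h => ⟨fun i => by positivity, fun i => ?_⟩⟩
  · exact_mod_cast add_half_le_natCast_iff.mp (by exact_mod_cast h.2 i)
  · exact_mod_cast add_half_le_natCast_iff.mpr (h i)

lemma scaledCellCenter_mem_centralBlock_iff {d k a b : ℕ} (hk : k = a + 2 * b) (hk0 : 0 < k)
    (z m : Fin d → ℕ) (j s : ℕ) :
    (fun i => cellCenter z i / (k : ℝ) ^ (j + 1 + s)) ∈ centralBlock d k a j m ↔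
      ∀ i, z i / k ^ (s + 1) = m i ∧ digit k s (z i) ∈ Ico b (b + a) :=
  forall_congr' fun i => centralBlock_coord_iff hk hk0 (z i) (m i) j s

lemma scaledCellCenter_mem_carpetF_iff {d k a b : ℕ} (hk : k = a + 2 * b) (hk0 : 0 < k)
    (z : Fin d → ℕ) (n : ℕ) :
    (fun i => cellCenter z i / (k : ℝ) ^ n) ∈ carpetF d k a n ↔
      (∀ i, z i < k ^ n) ∧ ∀ s < n, ∃ i, digit k s (z i) ∉ Ico b (b + a) := by
  rw [mem_carpetF_iff, scaledCellCenter_mem_Icc_iff hk0]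
  refine and_congr_right fun hz => ⟨fun h s hs => ?_, fun h j hj m _ hmem => ?_⟩
  · obtain ⟨j, rfl⟩ : ∃ j, n = j + 1 + s := ⟨n - 1 - s, by omega⟩
    by_contra! hdig
    refine h j (by omega) (fun i => z i / k ^ (s + 1)) (fun i => ?_)
      ((scaledCellCenter_mem_centralBlock_iff hk hk0 z _ j s).mpr fun i => ⟨rfl, hdig i⟩)
    rw [Nat.div_lt_iff_lt_mul (by positivity), ← pow_add]
    exact (hz i).trans_eq (by ring)
  · obtain ⟨s, rfl⟩ : ∃ s, n = j + 1 + s := ⟨n - 1 - j, by omega⟩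
    obtain ⟨i, hi⟩ := h s (by omega)
    exact hi ((scaledCellCenter_mem_centralBlock_iff hk hk0 z m j s).mp hmem i).2

lemma exists_one_le_forall_lt_pow {ι : Type*} [Fintype ι] {k : ℕ} (hk : 1 < k) (z : ι → ℕ) :
    ∃ n, 1 ≤ n ∧ ∀ i, z i < k ^ n := by
  refine ⟨Finset.univ.sup z + 1, by omega, fun i => ?_⟩
  have := Finset.le_sup (f := z) (Finset.mem_univ i)
  have := Nat.lt_pow_self (n := Finset.univ.sup z + 1) hk
  omega

lemma cellCenter_mem_preCarpet_iff {d k a b : ℕ} (hd : 0 < d) (hk : k = a + 2 * b) (hb : 0 < b)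
    (z : Fin d → ℕ) :
    cellCenter z ∈ preCarpet d k a ↔ CarpetDigits k (Ico b (b + a)) z := by
  have hk0 : 0 < k := by omega
  simp only [mem_preCarpet_iff hk0, scaledCellCenter_mem_carpetF_iff hk hk0]
  constructor
  · rintro ⟨n, -, hzn, hdig⟩ s
    by_cases hs : s < n
    · exact hdig s hs
    · refine ⟨⟨0, hd⟩, ?_⟩
      rw [digit_eq_zero_of_lt_pow ((hzn _).trans_le (Nat.pow_le_pow_right hk0 (by omega)))]
      simp [hb.ne']
  · intro h
    obtain ⟨n, hn, hzn⟩ := exists_one_le_forall_lt_pow (k := k) (by omega) z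
    exact ⟨n, hn, hzn, fun s _ => h s⟩

lemma cellCenter_mem_carpetVertexSet_iff {d k a b : ℕ} (hd : 0 < d) (hk : k = a + 2 * b)
    (hb : 0 < b) (z : Fin d → ℕ) :
    cellCenter z ∈ carpetVertexSet d k a ↔ CarpetDigits k (Ico b (b + a)) z := by
  rw [← cellCenter_mem_preCarpet_iff hd hk hb]
  exact and_iff_right fun i => ⟨z i, by simp [cellCenter]⟩

lemma exists_cellCenter_eq {d k a : ℕ} {x : Fin d → ℝ} (hx : x ∈ carpetVertexSet d k a) :
    ∃ z, cellCenter z = x := by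
  obtain ⟨hint, hpre⟩ := hx
  choose w hw using hint
  have hw0 (i : Fin d) : 0 ≤ w i := by
    have := nonneg_of_mem_preCarpet hpre i
    rw [hw i] at this
    have : (-1 : ℝ) < w i := by linarith
    exact_mod_cast this
  refine ⟨fun i => (w i).toNat, funext fun i => ?_⟩
  rw [hw i, cellCenter]
  exact_mod_cast congrArg (fun n : ℤ => (n : ℝ) + 1 / 2) (Int.toNat_of_nonneg (hw0 i))

lemma carpetGraph_adj_of_update_pred {d k a : ℕ} {z : Fin d → ℕ} {j : Fin d} (hj : z j ≠ 0)
    (hz : cellCenter z ∈ carpetVertexSet d k a)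
    (hz' : cellCenter (Function.update z j (z j - 1)) ∈ carpetVertexSet d k a) :
    (carpetGraph d k a).Adj ⟨_, hz⟩ ⟨_, hz'⟩ := by
  change Real.sqrt _ = 1
  rw [Finset.sum_eq_single j (fun i _ hij => by simp [cellCenter, hij]) (by simp)]
  simp [cellCenter, Nat.cast_pred (Nat.pos_of_ne_zero hj)]

lemma sum_update_pred_lt {ι : Type*} [Fintype ι] [DecidableEq ι] {z : ι → ℕ} {j : ι}
    (hj : z j ≠ 0) : ∑ i, Function.update z j (z j - 1) i < ∑ i, z i := by
  rw [Finset.sum_update_of_mem (Finset.mem_univ j), ← Finset.add_sum_erase _ _ (Finset.mem_univ j),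
    Finset.sdiff_singleton_eq_erase]
  omega

lemma carpetGraph_reachable_cellCenter_zero {d k a b : ℕ} (hd : 2 ≤ d) (hk : k = a + 2 * b)
    (hb : 0 < b) (z : Fin d → ℕ) (hz : cellCenter z ∈ carpetVertexSet d k a)
    (h0 : cellCenter 0 ∈ carpetVertexSet d k a) :
    (carpetGraph d k a).Reachable ⟨_, hz⟩ ⟨_, h0⟩ := by
  have : Nontrivial (Fin d) := Fin.nontrivial_iff_two_le.mpr hd
  have hmem := cellCenter_mem_carpetVertexSet_iff (d := d) (by omega) hk hb
  induction hn : ∑ i, z i using Nat.strong_induction_on generalizing z with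
  | _ n ih =>
    obtain rfl | ⟨i, hi⟩ := eq_or_ne z 0 |>.imp id Function.ne_iff.mp
    · rfl
    obtain ⟨j, hj, hw⟩ := ((hmem z).mp hz).exists_update_pred (by simp [hb.ne']) hi
    exact (carpetGraph_adj_of_update_pred hj hz ((hmem _).mpr hw)).reachable.trans
      (ih _ (hn ▸ sum_update_pred_lt hj) _ _ rfl)

theorem carpetGraph_connected_general (d k a : ℕ) (hd : 2 ≤ d)
    (hpar : Even (a + k)) (hka : a + 2 ≤ k) :
    (carpetGraph d k a).Connected := by
  obtain ⟨c, hc⟩ := hpar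
  obtain ⟨b, hk⟩ : ∃ b, k = a + 2 * b := ⟨c - a, by omega⟩
  have hb : 0 < b := by omega
  have : Nonempty (Fin d) := ⟨⟨0, by omega⟩⟩
  have h0 : cellCenter 0 ∈ carpetVertexSet d k a :=
    (cellCenter_mem_carpetVertexSet_iff (by omega) hk hb 0).mpr
      (carpetDigits_zero (by simp [hb.ne']))
  refine (SimpleGraph.connected_iff _).mpr ⟨fun ⟨x, hx⟩ ⟨y, hy⟩ => ?_, ⟨⟨_, h0⟩⟩⟩
  obtain ⟨z, rfl⟩ := exists_cellCenter_eq hx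
  obtain ⟨w, rfl⟩ := exists_cellCenter_eq hy
  exact (carpetGraph_reachable_cellCenter_zero hd hk hb z hx h0).trans
    (carpetGraph_reachable_cellCenter_zero hd hk hb w hy h0).symm

/-- the graphical Sierpinski carpet is a connected graph. -/
theorem carpetGraph_connected (d k a : ℕ) (hd : 2 ≤ d) (ha : 1 ≤ a) (hak : a < k)
    (hpar : Even (a + k)) (hka : a + 2 ≤ k) :
    (carpetGraph d k a).Connected :=
  carpetGraph_connected_general d k a hd hpar hka
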